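/- Let G be a group and x1, x2, x3, g2, g3 ∈ G. If [x1,x2g2,x3] = 1, [x1,x2g2,x3g3] = 1, [x1,x2,x3] = 1, [x1,x2,x3g2] = 1, and [x1,x2,x3g3] = 1, then [x1,g2,g3] = 1. -/
import Mathlib

/-- The commutator `[a,b] = a⁻¹ * b⁻¹ * a * b`. -/
def pcomm {G : Type*} [Group G] (a b : G) : G := a⁻¹ * b⁻¹ * a * b

/-- The triple commutator `[a,b,c] = [[a,b],c]`. -/
def pcomm3 {G : Type*} [Group G] (a b c : G) : G := pcomm (pcomm a b) c

/-- Conjugation `a ^ b = b⁻¹ * a * b`. -/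
def pconj {G : Type*} [Group G] (a b : G) : G := b⁻¹ * a * b

lemma pcomm_eq_one_iff {G : Type*} [Group G] (a b : G) :
    pcomm a b = 1 ↔ Commute a b := by
  unfold pcomm
  constructor
  · intro h
    have : a * b = b * a := by
      have h2 := congrArg (fun z => b * a * z) h
      have := h2.symm
      simp [mul_assoc] at this
      simpa [mul_assoc] using this.symm
    exact this
  · intro h
    have : a * b = b * a := h
    rw [mul_assoc, mul_assoc, this]
    group

theorem step_III {G : Type*} [Group G] (x₁ x₂ x₃ g₂ g₃ : G)
    (h9 : pcomm3 x₁ (x₂ * g₂) x₃ = 1)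
    (h11 : pcomm3 x₁ (x₂ * g₂) (x₃ * g₃) = 1)
    (h1 : pcomm3 x₁ x₂ x₃ = 1)
    (h10 : pcomm3 x₁ x₂ (x₃ * g₂) = 1)
    (h12 : pcomm3 x₁ x₂ (x₃ * g₃) = 1) :
    pcomm3 x₁ g₂ g₃ = 1 := by
  unfold pcomm3 at *
  rw [pcomm_eq_one_iff] at h9 h11 h1 h10 h12 ⊢
  set c := pcomm x₁ x₂ with hc
  set d := pcomm x₁ (x₂ * g₂) with hd
  -- c commutes with g₂
  have hcg₂ : Commute c g₂ := by
    have := (h1.inv_right.mul_right h10)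
    simpa [mul_assoc] using this
  -- c and d commute with g₃
  have hcg₃ : Commute c g₃ := by
    have := (h1.inv_right.mul_right h12)
    simpa [mul_assoc] using this
  have hdg₃ : Commute d g₃ := by
    have := (h9.inv_right.mul_right h11)
    simpa [mul_assoc] using this
  -- [x₁,g₂] = d * c⁻¹
  have key : pcomm x₁ g₂ = d * c⁻¹ := by
    have hsplit : d = pcomm x₁ g₂ * (g₂⁻¹ * c * g₂) := by
      rw [hd, hc]; unfold pcomm; group
    have : g₂⁻¹ * c * g₂ = c := by
      rw [mul_assoc, hcg₂.eq]; group
    rw [hsplit, this]; group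
  rw [key]
  exact hdg₃.mul_left hcg₃.inv_left
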